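/- arXiv:1507.00641 — 2 statements merged into one kernel-verified Lean document; each statement's English description precedes it below -/
import Mathlib

section
/- Let κ > 1, let n ∈ ℕ with n > 1, let m ∈ ℕ, and set η := max(1/κ, 1 − κ^{−1/(n−1)}). Suppose f, g ∈ C²([0,1]), g is strictly increasing with g'(x) > 0 on [0,1] and g''(x) ≠ 0 on (0,1), σ := max_{x∈[0,1]} |g'(x)|, and Ψ := (f/g') ∘ g^{-1} ∈ C^{m+1}([g(0), g(1)]). Let x_0 = 0 and x_j = κ^{(j−1)/(n−1)−1} for j = 1, …, n, and set N_j := ⌈max(|g'(x_{j−1})|, |g'(x_j)|)⌉. Then for the quadrature Q_{κ,n,m}[f,g] := Σ_{j=1}^n Q_{N_j,κ,m}^{[x_{j−1},x_j]}[f,g] one has |∫_0^1 f(x) e^{iκ g(x)} dx − Q_{κ,n,m}[f,g]| ≤ (3(m+1)/(m! κ²)) ‖Ψ^{(m+1)}‖_∞ σ η^{m−1}. -/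
open scoped BigOperators
open MeasureTheory

noncomputable section

/-- Oscillatory integral `∫_a^b f(x) e^{iκ g(x)} dx`. -/
def oscInt (κ : ℝ) (f g : ℝ → ℝ) (a b : ℝ) : ℂ :=
  ∫ x in a..b, (f x : ℂ) * Complex.exp (Complex.I * κ * g x)

/-- Moment-free Filon rule: `∫_{g(t_0)}^{g(t_m)} p_m(x) e^{iκx} dx` where `p_m` is the
Lagrange polynomial interpolating `Ψ` at the points `g(t_j)`. -/
def filonQ (κ : ℝ) (m : ℕ) (g : ℝ → ℝ) (Ψ : ℝ → ℝ) (t : Fin (m+1) → ℝ) : ℂ :=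
  ∫ x in (g (t 0))..(g (t (Fin.last m))),
    (((Lagrange.interpolate Finset.univ (fun j => g (t j)) (fun j => Ψ (g (t j)))).eval x : ℝ) : ℂ)
      * Complex.exp (Complex.I * κ * x)

/-- Composite moment-free Filon rule `Q_{N,κ,m}^{[a,b]}[f,g] = Σ_{l=1}^N Q_{κ,m}^{[y_{l-1},y_l]}`,
with the nodes on each subinterval supplied by `t`. -/
def compFilonQ (κ : ℝ) (m N : ℕ) (g : ℝ → ℝ) (Ψ : ℝ → ℝ)
    (t : Fin N → Fin (m+1) → ℝ) : ℂ :=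
  ∑ l : Fin N, filonQ κ m g Ψ (t l)

/-- Admissible node families for the composite rule on `[a,b]` with `N` equal subintervals:
on the `l`-th subinterval `[y_l, y_{l+1}]` (`y_l = a + (b-a) l/N`) the `m+1` strictly
increasing nodes include both endpoints. -/
def FilonNodes (a b : ℝ) (m N : ℕ) (t : Fin N → Fin (m+1) → ℝ) : Prop :=
  ∀ l : Fin N, StrictMono (t l) ∧ t l 0 = a + (b-a)*(l:ℝ)/(N:ℝ) ∧
    t l (Fin.last m) = a + (b-a)*((l:ℝ)+1)/(N:ℝ)

/-!
Substituting `y = g x` turns the integral into `∫ Ψ(y) e^{iκy} dy` over `[g 0, g 1]` and the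
rule into the sum, over the cells `[g t₀, g tₘ]`, of the integrals of the interpolant `p` of `Ψ`.
On a cell `[c, d]` of length `h` the error `e = Ψ - p` vanishes at both ends, so two integrations
by parts give `|∫ e(y) e^{iκy} dy| ≤ κ⁻² (|e'(c)| + |e'(d)| + h ‖e''‖)`, and Rolle's theorem
(`e'` has `m` zeros, `e''` has `m - 1`) bounds `e'` and `e''` by `C hᵐ / m!` and
`C hᵐ⁻¹ / (m-1)!`: the cell error is at most `(m + 2) C hᵐ / (m! κ²)`.
As `g''` does not vanish, `g'` is monotone, so `g' ≤ N_j` on `[x_{j-1}, x_j]` and every cell has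
length `h ≤ x_j - x_{j-1} ≤ η`. Hence `hᵐ ≤ ηᵐ⁻¹ h`, and the cell lengths add up to
`g 1 - g 0 ≤ σ`.
-/

open Set Polynomial Complex

lemma exists_finset_deriv_eq_zero {u u' : ℝ → ℝ} {c d : ℝ} {k : ℕ} {Z : Finset ℝ}
    (hZ : Z.card = k + 1) (hsub : ↑Z ⊆ Icc c d) (hc : ContinuousOn u (Icc c d))
    (hd : ∀ x ∈ Ioo c d, HasDerivAt u (u' x) x) (h0 : ∀ z ∈ Z, u z = 0) :
    ∃ Z' : Finset ℝ, Z'.card = k ∧ ↑Z' ⊆ Icc c d ∧ ∀ z ∈ Z', u' z = 0 := by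
  set z := Z.orderEmbOfFin hZ
  have hzZ : ∀ i, z i ∈ Z := Z.orderEmbOfFin_mem hZ
  have hzmem : ∀ i, z i ∈ Icc c d := fun i => hsub (hzZ i)
  have hgap : ∀ i : Fin k, ∃ w ∈ Ioo (z i.castSucc) (z i.succ), u' w = 0 := fun i =>
    exists_hasDerivAt_eq_zero (z.strictMono i.castSucc_lt_succ)
      (hc.mono (Icc_subset_Icc (hzmem _).1 (hzmem _).2))
      (by rw [h0 _ (hzZ _), h0 _ (hzZ _)])
      (fun x hx => hd x ⟨(hzmem _).1.trans_lt hx.1, hx.2.trans_le (hzmem _).2⟩)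
  choose w hw hw0 using hgap
  have hw_mono : StrictMono w := fun i j hij =>
    (hw i).2.trans ((z.monotone (Fin.succ_le_castSucc_iff.mpr hij)).trans_lt (hw j).1)
  refine ⟨Finset.univ.image w, by simp [Finset.card_image_of_injective _ hw_mono.injective],
    ?_, by simpa using hw0⟩
  simp only [Finset.coe_image, Finset.coe_univ, image_univ]
  rintro _ ⟨i, rfl⟩
  exact ⟨(hzmem _).1.trans (hw i).1.le, (hw i).2.le.trans (hzmem _).2⟩

lemma exists_finset_iterate_eq_zero (F : ℕ → ℝ → ℝ) {c d : ℝ} {k s : ℕ} (hs : s ≤ k)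
    (hc : ∀ i < s, ContinuousOn (F i) (Icc c d))
    (hd : ∀ i < s, ∀ x ∈ Ioo c d, HasDerivAt (F i) (F (i + 1) x) x)
    {Z : Finset ℝ} (hZ : Z.card = k) (hsub : ↑Z ⊆ Icc c d) (h0 : ∀ z ∈ Z, F 0 z = 0) :
    ∃ Z' : Finset ℝ, Z'.card = k - s ∧ ↑Z' ⊆ Icc c d ∧ ∀ z ∈ Z', F s z = 0 := by
  induction s with
  | zero => exact ⟨Z, hZ, hsub, h0⟩
  | succ s ih =>
    obtain ⟨Z', hZ', hsub', h0'⟩ :=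
      ih (by omega) (fun i hi => hc i (by omega)) (fun i hi => hd i (by omega))
    exact exists_finset_deriv_eq_zero (k := k - (s + 1)) (by omega) hsub' (hc s (by omega))
      (hd s (by omega)) h0'

lemma iterate_derivative_prod_X_sub_C {R : Type*} [CommRing R] (Z : Finset R) :
    derivative^[Z.card] (∏ z ∈ Z, (X - C z)) = C (Z.card.factorial : R) := by
  nontriviality R
  set W := ∏ z ∈ Z, (X - C z)
  have hW : W.Monic := monic_prod_of_monic _ _ fun z _ => monic_X_sub_C z
  have hdeg : W.natDegree = Z.card := by
    rw [natDegree_prod_of_monic _ _ fun z _ => monic_X_sub_C z]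
    simp
  have h0 : (derivative^[Z.card] W).natDegree ≤ 0 := by
    have := natDegree_iterate_derivative W Z.card
    omega
  rw [eq_C_of_natDegree_le_zero h0, coeff_iterate_derivative]
  simp [← hdeg, hW.coeff_natDegree, Nat.descFactorial_self]

/-- Rolle's theorem applied `j` times to `u ↦ F 0 u * W y - F 0 y * W u`, which vanishes on
`Z ∪ {y}` since `W = ∏ z ∈ Z, (X - C z)`. -/
lemma abs_le_of_card_zeros (F : ℕ → ℝ → ℝ) {c d M : ℝ} {j : ℕ}
    (hc : ∀ i < j, ContinuousOn (F i) (Icc c d))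
    (hd : ∀ i < j, ∀ x ∈ Ioo c d, HasDerivAt (F i) (F (i + 1) x) x)
    (hM : ∀ x ∈ Icc c d, |F j x| ≤ M)
    {Z : Finset ℝ} (hZ : Z.card = j) (hsub : ↑Z ⊆ Icc c d) (h0 : ∀ z ∈ Z, F 0 z = 0) :
    ∀ y ∈ Icc c d, |F 0 y| ≤ M * (d - c) ^ j / j.factorial := by
  intro y hy
  have hM0 : 0 ≤ M := (abs_nonneg _).trans (hM y hy)
  by_cases hyZ : y ∈ Z
  · rw [h0 y hyZ, abs_zero]
    exact div_nonneg (mul_nonneg hM0 (pow_nonneg (by linarith [hy.1, hy.2]) j)) (by positivity)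
  set W := ∏ z ∈ Z, (X - C z)
  have hWeval : ∀ u, W.eval u = ∏ z ∈ Z, (u - z) := fun u => by simp [W, eval_prod]
  set H : ℕ → ℝ → ℝ := fun i u => F i u * W.eval y - F 0 y * (derivative^[i] W).eval u
  obtain ⟨Z', hZ', hZ'sub, hZ'0⟩ := exists_finset_iterate_eq_zero H (k := j + 1) (s := j) (by omega)
    (fun i hi => ((hc i hi).mul continuousOn_const).sub
      (continuousOn_const.mul (Polynomial.continuous _).continuousOn))
    (fun i hi x hx => ((hd i hi x hx).mul_const _).sub
      (((Polynomial.hasDerivAt _ x).const_mul _).congr_deriv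
        (by rw [Function.iterate_succ_apply'])))
    (by rw [Finset.card_insert_of_notMem hyZ, hZ])
    (by simpa [Set.insert_subset_iff] using ⟨hy, hsub⟩)
    (by
      intro z hz
      rcases Finset.mem_insert.mp hz with rfl | hz
      · simp [H]
      · simp [H, h0 z hz, hWeval, Finset.prod_eq_zero hz])
  obtain ⟨ξ, hξ⟩ := Finset.card_eq_one.mp (by rw [hZ']; omega)
  have hξZ' : ξ ∈ Z' := by simp [hξ]
  have hkey : F j ξ * W.eval y = F 0 y * j.factorial := by
    have hWj : derivative^[j] W = C (j.factorial : ℝ) := hZ ▸ iterate_derivative_prod_X_sub_C Z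
    have := hZ'0 ξ hξZ'
    simp only [H, hWj, eval_C] at this
    linarith
  have hWy : |W.eval y| ≤ (d - c) ^ j := by
    rw [hWeval, Finset.abs_prod, ← hZ]
    refine (Finset.prod_le_prod (fun _ _ => abs_nonneg _) fun z hz => ?_).trans_eq
      (Finset.prod_const _)
    have := hsub hz
    exact abs_sub_le_iff.mpr ⟨by linarith [hy.2, this.1], by linarith [hy.1, this.2]⟩
  rw [le_div_iff₀ (by positivity), ← abs_of_pos (a := (j.factorial : ℝ)) (by positivity),
    ← abs_mul, ← hkey, abs_mul]
  exact mul_le_mul (hM ξ (hZ'sub hξZ')) hWy (abs_nonneg _) hM0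

open Topology in
lemma ContDiffOn.hasDerivAt_iteratedDerivWithin {f : ℝ → ℝ} {a b : ℝ} {n : WithTop ℕ∞} {s : ℕ}
    (hf : ContDiffOn ℝ n f (Icc a b)) (hs : (s : WithTop ℕ∞) < n) {x : ℝ} (hx : x ∈ Ioo a b) :
    HasDerivAt (iteratedDerivWithin s f (Icc a b))
      (iteratedDerivWithin (s + 1) f (Icc a b) x) x := by
  have hnhds : Icc a b ∈ 𝓝 x := Icc_mem_nhds hx.1 hx.2
  rw [iteratedDerivWithin_succ, derivWithin_of_mem_nhds hnhds]
  exact ((hf.differentiableOn_iteratedDerivWithin hs (uniqueDiffOn_Icc (hx.1.trans hx.2)) x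
    (Ioo_subset_Icc_self hx)).differentiableAt hnhds).hasDerivAt

lemma ContDiffOn.hasDerivAt_derivWithin {f : ℝ → ℝ} {a b : ℝ} (hf : ContDiffOn ℝ 1 f (Icc a b))
    {x : ℝ} (hx : x ∈ Ioo a b) : HasDerivAt f (derivWithin f (Icc a b) x) x := by
  simpa using hf.hasDerivAt_iteratedDerivWithin (s := 0) (by norm_num) hx

def interpolationError {m : ℕ} (Ψ : ℝ → ℝ) (s : Set ℝ) (z : Fin (m + 1) → ℝ) (i : ℕ) (y : ℝ) :
    ℝ :=
  iteratedDerivWithin i Ψ s y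
    - (derivative^[i] (Lagrange.interpolate Finset.univ z fun j => Ψ (z j))).eval y

section InterpolationError

variable {m : ℕ} {G₀ G₁ : ℝ} {Ψ : ℝ → ℝ} {z : Fin (m + 1) → ℝ}

lemma continuousOn_interpolationError (hG : G₀ < G₁) (hΨ : ContDiffOn ℝ (m + 1) Ψ (Icc G₀ G₁))
    {i : ℕ} (hi : i ≤ m + 1) :
    ContinuousOn (interpolationError Ψ (Icc G₀ G₁) z i) (Icc G₀ G₁) :=
  (hΨ.continuousOn_iteratedDerivWithin (by exact_mod_cast hi) (uniqueDiffOn_Icc hG)).sub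
    (Polynomial.continuous _).continuousOn

lemma hasDerivAt_interpolationError (hΨ : ContDiffOn ℝ (m + 1) Ψ (Icc G₀ G₁)) {i : ℕ}
    (hi : i ≤ m) {x : ℝ} (hx : x ∈ Ioo G₀ G₁) :
    HasDerivAt (interpolationError Ψ (Icc G₀ G₁) z i)
      (interpolationError Ψ (Icc G₀ G₁) z (i + 1) x) x :=
  (hΨ.hasDerivAt_iteratedDerivWithin (by exact_mod_cast Nat.lt_succ_of_le hi) hx).sub
    ((Polynomial.hasDerivAt _ x).congr_deriv (by rw [Function.iterate_succ_apply']))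

lemma interpolationError_zero_node (hz : StrictMono z) (s : Set ℝ) (j : Fin (m + 1)) :
    interpolationError Ψ s z 0 (z j) = 0 := by
  rw [interpolationError, iteratedDerivWithin_zero, Function.iterate_zero_apply,
    Lagrange.eval_interpolate_at_node _ hz.injective.injOn (Finset.mem_univ j), sub_self]

lemma abs_interpolationError_le {s : ℕ} (hs : s ≤ m + 1) {C : ℝ} (hG : G₀ < G₁)
    (hΨ : ContDiffOn ℝ (m + 1) Ψ (Icc G₀ G₁))
    (hC : ∀ y ∈ Icc G₀ G₁, |iteratedDerivWithin (m + 1) Ψ (Icc G₀ G₁) y| ≤ C)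
    (hz : StrictMono z) (hz₀ : G₀ ≤ z 0) (hzm : z (Fin.last m) ≤ G₁) :
    ∀ y ∈ Icc (z 0) (z (Fin.last m)), |interpolationError Ψ (Icc G₀ G₁) z s y|
        ≤ C * (z (Fin.last m) - z 0) ^ (m + 1 - s) / (m + 1 - s).factorial := by
  set F := interpolationError Ψ (Icc G₀ G₁) z
  have hsub : Icc (z 0) (z (Fin.last m)) ⊆ Icc G₀ G₁ := Icc_subset_Icc hz₀ hzm
  have hc : ∀ i ≤ m + 1, ContinuousOn (F i) (Icc (z 0) (z (Fin.last m))) := fun i hi =>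
    (continuousOn_interpolationError hG hΨ hi).mono hsub
  have hd : ∀ i ≤ m, ∀ x ∈ Ioo (z 0) (z (Fin.last m)), HasDerivAt (F i) (F (i + 1) x) x :=
    fun i hi x hx => hasDerivAt_interpolationError hΨ hi (Ioo_subset_Ioo hz₀ hzm hx)
  have hp_deg : derivative^[m + 1] (Lagrange.interpolate Finset.univ z fun j => Ψ (z j)) = 0 :=
    iterate_derivative_eq_zero_of_degree_lt <| by
      simpa using Lagrange.degree_interpolate_lt (s := Finset.univ) (fun j => Ψ (z j))
        hz.injective.injOn
  have hzmem : ∀ j, z j ∈ Icc (z 0) (z (Fin.last m)) := fun j =>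
    ⟨hz.monotone (Fin.zero_le j), hz.monotone (Fin.le_last j)⟩
  obtain ⟨Z, hZ, hZsub, hZ0⟩ := exists_finset_iterate_eq_zero F (k := m + 1)
    (Z := Finset.univ.image z) hs (fun i hi => hc i (by omega)) (fun i hi => hd i (by omega))
    (by simp [Finset.card_image_of_injective _ hz.injective])
    (by simpa [Set.range_subset_iff] using hzmem)
    (by simpa using interpolationError_zero_node hz _)
  refine abs_le_of_card_zeros (fun i => F (s + i)) (fun i hi => hc _ (by omega))
    (fun i hi => hd _ (by omega)) (fun y hy => ?_) hZ hZsub hZ0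
  simp only [F, interpolationError, Nat.add_sub_cancel' hs, hp_deg, eval_zero, sub_zero]
  exact hC y (hsub hy)

end InterpolationError

lemma norm_cexp_I_mul_ofReal_mul (κ y : ℝ) : ‖cexp (I * κ * y)‖ = 1 := by
  rw [norm_exp]
  simp

lemma ContinuousOn.ofReal_mul_cexp {Ψ : ℝ → ℝ} {s : Set ℝ} (hΨ : ContinuousOn Ψ s) (κ : ℝ) :
    ContinuousOn (fun y => (Ψ y : ℂ) * cexp (I * κ * y)) s :=
  (continuous_ofReal.comp_continuousOn hΨ).mul (by fun_prop)

lemma norm_integral_mul_cexp_le {κ : ℝ} (hκ : 0 < κ) {c d : ℝ} (hcd : c ≤ d) {u v : ℝ → ℝ}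
    (hu : ContinuousOn u (Icc c d)) (hv : ContinuousOn v (Icc c d))
    (huv : ∀ x ∈ Ioo c d, HasDerivAt u (v x) x) :
    ‖∫ y in c..d, (u y : ℂ) * cexp (I * κ * y)‖
      ≤ (|u c| + |u d| + ‖∫ y in c..d, (v y : ℂ) * cexp (I * κ * y)‖) / κ := by
  have hIκ : I * κ ≠ 0 := mul_ne_zero I_ne_zero (ofReal_ne_zero.mpr hκ.ne')
  have hnorm : ‖(I * κ : ℂ)⁻¹‖ = κ⁻¹ := by simp [abs_of_pos hκ]
  have hE : ∀ x : ℝ, HasDerivAt (fun y : ℝ => cexp (I * κ * y) * (I * κ)⁻¹) (cexp (I * κ * x)) x :=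
    fun x => by
      have := (((hasDerivAt_id (x : ℂ)).const_mul (I * κ)).cexp.comp_ofReal).mul_const (I * κ)⁻¹
      exact this.congr_deriv (by simp only [id, mul_one, mul_assoc, mul_inv_cancel₀ hIκ])
  have hibp := intervalIntegral.integral_mul_deriv_eq_deriv_mul_of_hasDerivAt
    (u := fun y => (u y : ℂ)) (u' := fun y => (v y : ℂ))
    (by rw [uIcc_of_le hcd]; exact continuous_ofReal.comp_continuousOn hu)
    (fun x _ => (hE x).continuousAt.continuousWithinAt)
    (fun x hx => (huv x (by simpa [hcd] using hx)).ofReal_comp) (fun x _ => hE x)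
    ((continuous_ofReal.comp_continuousOn hv).intervalIntegrable_of_Icc hcd)
    ((by fun_prop : Continuous fun y : ℝ => cexp (I * κ * y)).intervalIntegrable _ _)
  simp only [← mul_assoc, intervalIntegral.integral_mul_const] at hibp
  rw [hibp, div_eq_mul_inv]
  refine (norm_sub_le _ _).trans ?_
  refine (add_le_add_left (norm_sub_le _ _) _).trans_eq ?_
  simp only [norm_mul, norm_real, Real.norm_eq_abs, norm_cexp_I_mul_ofReal_mul, hnorm]
  ring

lemma norm_integral_mul_cexp_le_of_two_derivs {κ : ℝ} (hκ : 0 < κ) {c d : ℝ} (hcd : c ≤ d)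
    {u₀ u₁ u₂ : ℝ → ℝ} {B₁ B₂ : ℝ} (hc₀ : ContinuousOn u₀ (Icc c d))
    (hc₁ : ContinuousOn u₁ (Icc c d)) (hc₂ : ContinuousOn u₂ (Icc c d))
    (hd₀ : ∀ x ∈ Ioo c d, HasDerivAt u₀ (u₁ x) x) (hd₁ : ∀ x ∈ Ioo c d, HasDerivAt u₁ (u₂ x) x)
    (hu₀c : u₀ c = 0) (hu₀d : u₀ d = 0) (hB₁ : ∀ y ∈ Icc c d, |u₁ y| ≤ B₁)
    (hB₂ : ∀ y ∈ Icc c d, |u₂ y| ≤ B₂) :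
    ‖∫ y in c..d, (u₀ y : ℂ) * cexp (I * κ * y)‖ ≤ (2 * B₁ + B₂ * (d - c)) / κ ^ 2 := by
  have hI₂ : ‖∫ y in c..d, (u₂ y : ℂ) * cexp (I * κ * y)‖ ≤ B₂ * (d - c) := by
    refine (intervalIntegral.norm_integral_le_of_norm_le_const fun y hy => ?_).trans_eq
      (by rw [abs_of_nonneg (sub_nonneg.mpr hcd)])
    rw [norm_mul, norm_cexp_I_mul_ofReal_mul, mul_one, norm_real, Real.norm_eq_abs]
    exact hB₂ y (Ioc_subset_Icc_self (by simpa [hcd] using hy))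
  have hI₀ := norm_integral_mul_cexp_le hκ hcd hc₀ hc₁ hd₀
  rw [hu₀c, hu₀d] at hI₀
  calc _ ≤ ‖∫ y in c..d, (u₁ y : ℂ) * cexp (I * κ * y)‖ / κ := by simpa using hI₀
    _ ≤ (B₁ + B₁ + B₂ * (d - c)) / κ / κ := by
      gcongr
      refine (norm_integral_mul_cexp_le hκ hcd hc₁ hc₂ hd₁).trans ?_
      gcongr
      exacts [hB₁ c (left_mem_Icc.mpr hcd), hB₁ d (right_mem_Icc.mpr hcd)]
    _ = _ := by ring

lemma norm_integral_sub_filonQ_le {κ : ℝ} (hκ : 0 < κ) {m : ℕ} (hm : 1 ≤ m) {G₀ G₁ C : ℝ}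
    {Ψ : ℝ → ℝ} (hΨ : ContDiffOn ℝ (m + 1) Ψ (Icc G₀ G₁))
    (hC : ∀ y ∈ Icc G₀ G₁, |iteratedDerivWithin (m + 1) Ψ (Icc G₀ G₁) y| ≤ C)
    {z : Fin (m + 1) → ℝ} (hz : StrictMono z) (hz₀ : G₀ ≤ z 0) (hzm : z (Fin.last m) ≤ G₁) :
    ‖(∫ y in z 0..z (Fin.last m), (Ψ y : ℂ) * cexp (I * κ * y)) - filonQ κ m id Ψ z‖
      ≤ (m + 2) * C * (z (Fin.last m) - z 0) ^ m / (m.factorial * κ ^ 2) := by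
  set c := z 0
  set d := z (Fin.last m)
  have : NeZero m := ⟨by omega⟩
  have hcd : c < d := hz Fin.last_pos'
  have hG : G₀ < G₁ := hz₀.trans_lt (hcd.trans_le hzm)
  have hsub : Icc c d ⊆ Icc G₀ G₁ := Icc_subset_Icc hz₀ hzm
  set F := interpolationError Ψ (Icc G₀ G₁) z
  have hc : ∀ i ≤ m + 1, ContinuousOn (F i) (Icc c d) := fun i hi =>
    (continuousOn_interpolationError hG hΨ hi).mono hsub
  have hd : ∀ i ≤ m, ∀ x ∈ Ioo c d, HasDerivAt (F i) (F (i + 1) x) x :=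
    fun i hi x hx => hasDerivAt_interpolationError hΨ hi (Ioo_subset_Ioo hz₀ hzm hx)
  have hF₁ : ∀ y ∈ Icc c d, |F 1 y| ≤ C * (d - c) ^ m / m.factorial := by
    simpa using abs_interpolationError_le (s := 1) (by omega) hG hΨ hC hz hz₀ hzm
  have hF₂ : ∀ y ∈ Icc c d, |F 2 y| ≤ C * (d - c) ^ (m - 1) / (m - 1).factorial := by
    simpa [show m + 1 - 2 = m - 1 by omega] using
      abs_interpolationError_le (s := 2) (by omega) hG hΨ hC hz hz₀ hzm
  have hdiff : (∫ y in c..d, (Ψ y : ℂ) * cexp (I * κ * y)) - filonQ κ m id Ψ z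
      = ∫ y in c..d, (F 0 y : ℂ) * cexp (I * κ * y) := by
    rw [filonQ, id, id, ← intervalIntegral.integral_sub]
    · simp [F, interpolationError, sub_mul]
    · refine ContinuousOn.intervalIntegrable ?_
      rw [uIcc_of_le hcd.le]
      exact (hΨ.continuousOn.mono hsub).ofReal_mul_cexp κ
    · exact Continuous.intervalIntegrable (by fun_prop) _ _
  have hfact : (m.factorial : ℝ) = m * (m - 1).factorial := by
    exact_mod_cast (Nat.mul_factorial_pred (by omega)).symm
  have hpow : (d - c) ^ m = (d - c) ^ (m - 1) * (d - c) := by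
    rw [← pow_succ, Nat.sub_add_cancel hm]
  rw [hdiff]
  refine (norm_integral_mul_cexp_le_of_two_derivs hκ hcd.le (hc 0 (by omega)) (hc 1 (by omega))
    (hc 2 (by omega)) (hd 0 (by omega)) (hd 1 hm) (interpolationError_zero_node hz _ 0)
    (interpolationError_zero_node hz _ _) hF₁ hF₂).trans_eq ?_
  rw [hpow, hfact]
  field_simp
  ring

lemma norm_integral_sub_sum_le {φ : ℝ → ℂ} {b : ℕ → ℝ} {N : ℕ} {Q : Fin N → ℂ} {L : ℝ}
    (hφ : ∀ k < N, IntervalIntegrable φ MeasureTheory.volume (b k) (b (k + 1)))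
    (hQ : ∀ k : Fin N, ‖(∫ y in b k..b (k + 1), φ y) - Q k‖ ≤ L * (b (k + 1) - b k)) :
    ‖(∫ y in b 0..b N, φ y) - ∑ k, Q k‖ ≤ L * (b N - b 0) := by
  rw [← intervalIntegral.sum_integral_adjacent_intervals hφ, ← Finset.sum_range_sub b,
    Finset.mul_sum, ← Fin.sum_univ_eq_sum_range (fun k => ∫ y in b k..b (k + 1), φ y),
    ← Fin.sum_univ_eq_sum_range (fun k => L * (b (k + 1) - b k)), ← Finset.sum_sub_distrib]
  exact (norm_sum_le _ _).trans (Finset.sum_le_sum fun k _ => hQ k)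

lemma norm_integral_sub_filonQ_le_of_le {κ : ℝ} (hκ : 0 < κ) {m : ℕ} (hm : 1 ≤ m)
    {G₀ G₁ C η : ℝ} {Ψ : ℝ → ℝ} (hΨ : ContDiffOn ℝ (m + 1) Ψ (Icc G₀ G₁))
    (hC : ∀ y ∈ Icc G₀ G₁, |iteratedDerivWithin (m + 1) Ψ (Icc G₀ G₁) y| ≤ C)
    {z : Fin (m + 1) → ℝ} (hz : StrictMono z) (hz₀ : G₀ ≤ z 0) (hzm : z (Fin.last m) ≤ G₁)
    (hη : z (Fin.last m) - z 0 ≤ η) :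
    ‖(∫ y in z 0..z (Fin.last m), (Ψ y : ℂ) * cexp (I * κ * y)) - filonQ κ m id Ψ z‖
      ≤ (m + 2) * C * η ^ (m - 1) / (m.factorial * κ ^ 2) * (z (Fin.last m) - z 0) := by
  have hzz : z 0 ≤ z (Fin.last m) := hz.monotone (Fin.zero_le _)
  have hC₀ : 0 ≤ C := (abs_nonneg _).trans (hC _ ⟨le_rfl, hz₀.trans (hzz.trans hzm)⟩)
  refine (norm_integral_sub_filonQ_le hκ hm hΨ hC hz hz₀ hzm).trans ?_
  set h := z (Fin.last m) - z 0
  have hh : 0 ≤ h := sub_nonneg.mpr hzz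
  calc _ = (m + 2) * C / (m.factorial * κ ^ 2) * h ^ (m - 1) * h := by
        rw [mul_assoc _ (h ^ (m - 1)), ← pow_succ, Nat.sub_add_cancel hm]
        ring
    _ ≤ (m + 2) * C / (m.factorial * κ ^ 2) * η ^ (m - 1) * h := by gcongr
    _ = _ := by ring

lemma add_sub_mul_div_mem_Icc {a b : ℝ} (hab : a ≤ b) {k N : ℕ} (hk : k ≤ N) :
    a + (b - a) * k / N ∈ Icc a b := by
  have h₀ : (0 : ℝ) ≤ k / N := by positivity
  have h₁ : (k : ℝ) / N ≤ 1 := div_le_one_of_le₀ (by exact_mod_cast hk) (by positivity)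
  rw [mul_div_assoc]
  constructor <;> nlinarith

lemma norm_integral_sub_compFilonQ_le {κ : ℝ} (hκ : 0 < κ) {m : ℕ} (hm : 1 ≤ m)
    {G₀ G₁ C η : ℝ} {Ψ : ℝ → ℝ} (hΨ : ContDiffOn ℝ (m + 1) Ψ (Icc G₀ G₁))
    (hC : ∀ y ∈ Icc G₀ G₁, |iteratedDerivWithin (m + 1) Ψ (Icc G₀ G₁) y| ≤ C)
    {g : ℝ → ℝ} {a b : ℝ} (hg : StrictMonoOn g (Icc a b))
    (hgG : MapsTo g (Icc a b) (Icc G₀ G₁)) {N : ℕ} (hN : 0 < N)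
    (hslope : ∀ u ∈ Icc a b, ∀ v ∈ Icc a b, u ≤ v → g v - g u ≤ N * (v - u))
    (hη : b - a ≤ η) {t : Fin N → Fin (m + 1) → ℝ} (ht : FilonNodes a b m N t) :
    ‖(∫ y in g a..g b, (Ψ y : ℂ) * cexp (I * κ * y)) - compFilonQ κ m N g Ψ t‖
      ≤ (m + 2) * C * η ^ (m - 1) / (m.factorial * κ ^ 2) * (g b - g a) := by
  have hN' : (0 : ℝ) < N := by exact_mod_cast hN
  set τ : ℕ → ℝ := fun k => a + (b - a) * k / N
  have hτ_end : ∀ l : Fin N, t l 0 = τ l ∧ t l (Fin.last m) = τ (l + 1) := fun l =>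
    ⟨(ht l).2.1, by simp [(ht l).2.2, τ]⟩
  have hτ_step : ∀ k : ℕ, (N : ℝ) * (τ (k + 1) - τ k) = b - a := fun k => by
    simp only [τ]
    push_cast
    field_simp
    ring
  have hab : a ≤ b := by
    have := (ht ⟨0, hN⟩).1.monotone (Fin.zero_le (Fin.last m))
    rw [(hτ_end _).1, (hτ_end _).2] at this
    nlinarith [hτ_step 0]
  have hτ_mem : ∀ k ≤ N, τ k ∈ Icc a b := fun k hk => add_sub_mul_div_mem_Icc hab hk
  have ht_mem : ∀ l i, t l i ∈ Icc a b := fun l i =>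
    ⟨((hτ_end l).1 ▸ hτ_mem l l.isLt.le).1.trans ((ht l).1.monotone (Fin.zero_le i)),
      ((ht l).1.monotone (Fin.le_last i)).trans ((hτ_end l).2 ▸ hτ_mem _ l.isLt).2⟩
  have hΨe := hΨ.continuousOn.ofReal_mul_cexp κ
  have hcell : ∀ l : Fin N,
      ‖(∫ y in g (τ l)..g (τ (l + 1)), (Ψ y : ℂ) * cexp (I * κ * y)) - filonQ κ m g Ψ (t l)‖
        ≤ (m + 2) * C * η ^ (m - 1) / (m.factorial * κ ^ 2) * (g (τ (l + 1)) - g (τ l)) := by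
    intro l
    rw [← (hτ_end l).1, ← (hτ_end l).2]
    refine norm_integral_sub_filonQ_le_of_le hκ hm hΨ hC
      (fun i j hij => hg (ht_mem l i) (ht_mem l j) ((ht l).1 hij))
      (hgG (ht_mem l 0)).1 (hgG (ht_mem l _)).2 ?_
    refine (hslope _ (ht_mem l 0) _ (ht_mem l _) ((ht l).1.monotone (Fin.zero_le _))).trans ?_
    rw [(hτ_end l).1, (hτ_end l).2, hτ_step]
    exact hη
  have hsum := norm_integral_sub_sum_le (b := fun k => g (τ k))
    (fun k hk => (hΨe.mono (uIcc_subset_Icc (hgG (hτ_mem k hk.le))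
      (hgG (hτ_mem _ hk)))).intervalIntegrable) hcell
  simpa [τ, hN'.ne', compFilonQ] using hsum

lemma le_max_of_hasDerivAt_ne_zero {h h' : ℝ → ℝ} {a b : ℝ} (hc : ContinuousOn h (Icc a b))
    (hd : ∀ x ∈ Ioo a b, HasDerivAt h (h' x) x) (hne : ∀ x ∈ Ioo a b, h' x ≠ 0)
    {u : ℝ} (hu : u ∈ Icc a b) : h u ≤ max (h a) (h b) := by
  have hinj : InjOn h (Icc a b) := by
    intro v hv w hw hvw
    by_contra hne'
    wlog hlt : v < w generalizing v w
    · exact this hw hv hvw.symm (Ne.symm hne') (lt_of_le_of_ne (not_lt.mp hlt) (Ne.symm hne'))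
    obtain ⟨ξ, hξ, hξ₀⟩ := exists_hasDerivAt_eq_zero hlt (hc.mono (Icc_subset_Icc hv.1 hw.2))
      hvw (fun y hy => hd y ⟨hv.1.trans_lt hy.1, hy.2.trans_le hw.2⟩)
    exact hne ξ ⟨hv.1.trans_lt hξ.1, hξ.2.trans_le hw.2⟩ hξ₀
  have hab : a ≤ b := hu.1.trans hu.2
  rcases hc.strictMonoOn_of_injOn_Icc' hab hinj with hmono | hanti
  · exact le_max_of_le_right (hmono.monotoneOn hu (right_mem_Icc.mpr hab) hu.2)
  · exact le_max_of_le_left (hanti.antitoneOn (left_mem_Icc.mpr hab) hu hu.1)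

lemma derivWithin_le_max_of_iteratedDerivWithin_ne_zero {g : ℝ → ℝ} {a₀ b₀ a b : ℝ}
    (h₀ : a₀ < b₀) (hg : ContDiffOn ℝ 2 g (Icc a₀ b₀))
    (hg'' : ∀ x ∈ Ioo a₀ b₀, iteratedDerivWithin 2 g (Icc a₀ b₀) x ≠ 0)
    (ha : a₀ ≤ a) (hb : b ≤ b₀) {u : ℝ} (hu : u ∈ Icc a b) :
    derivWithin g (Icc a₀ b₀) u
      ≤ max (derivWithin g (Icc a₀ b₀) a) (derivWithin g (Icc a₀ b₀) b) := by
  simp only [← iteratedDerivWithin_one]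
  exact le_max_of_hasDerivAt_ne_zero
    ((hg.continuousOn_iteratedDerivWithin (by norm_num) (uniqueDiffOn_Icc h₀)).mono
      (Icc_subset_Icc ha hb))
    (fun x hx => hg.hasDerivAt_iteratedDerivWithin (by norm_num) (Ioo_subset_Ioo ha hb hx))
    (fun x hx => hg'' x (Ioo_subset_Ioo ha hb hx)) hu

lemma sub_le_mul_sub_of_derivWithin_le {g : ℝ → ℝ} {a₀ b₀ a b L : ℝ}
    (hg : ContDiffOn ℝ 1 g (Icc a₀ b₀)) (ha : a₀ ≤ a) (hb : b ≤ b₀)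
    (hL : ∀ x ∈ Ioo a b, derivWithin g (Icc a₀ b₀) x ≤ L) {u v : ℝ} (hu : u ∈ Icc a b)
    (hv : v ∈ Icc a b) (huv : u ≤ v) : g v - g u ≤ L * (v - u) := by
  have hder : ∀ x ∈ interior (Icc a b), HasDerivAt g (derivWithin g (Icc a₀ b₀) x) x :=
    fun x hx => hg.hasDerivAt_derivWithin (Ioo_subset_Ioo ha hb (by rwa [interior_Icc] at hx))
  exact (convex_Icc a b).image_sub_le_mul_sub_of_deriv_le
    (hg.continuousOn.mono (Icc_subset_Icc ha hb))
    (fun x hx => (hder x hx).differentiableAt.differentiableWithinAt)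
    (fun x hx => (hder x hx).deriv ▸ hL x (by rwa [interior_Icc] at hx)) u hu v hv huv

lemma sub_le_natCeil_mul_sub {g : ℝ → ℝ} {a₀ b₀ a b : ℝ} (h₀ : a₀ < b₀)
    (hg : ContDiffOn ℝ 2 g (Icc a₀ b₀))
    (hg'' : ∀ x ∈ Ioo a₀ b₀, iteratedDerivWithin 2 g (Icc a₀ b₀) x ≠ 0)
    (ha : a₀ ≤ a) (hb : b ≤ b₀) {u v : ℝ} (hu : u ∈ Icc a b) (hv : v ∈ Icc a b) (huv : u ≤ v) :
    g v - g u ≤ ⌈max |derivWithin g (Icc a₀ b₀) a| |derivWithin g (Icc a₀ b₀) b|⌉₊ * (v - u) :=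
  sub_le_mul_sub_of_derivWithin_le (hg.of_le one_le_two) ha hb (fun _ hx =>
    (derivWithin_le_max_of_iteratedDerivWithin_ne_zero h₀ hg hg'' ha hb
      (Ioo_subset_Icc_self hx)).trans
    ((max_le_max (le_abs_self _) (le_abs_self _)).trans (Nat.le_ceil _))) hu hv huv

lemma oscInt_eq_integral_comp {κ : ℝ} {f g Ψ : ℝ → ℝ} {a b : ℝ} (hab : a < b)
    (hg : ContDiffOn ℝ 1 g (Icc a b)) (hg' : ∀ x ∈ Icc a b, derivWithin g (Icc a b) x ≠ 0)
    (hΨdef : ∀ x ∈ Icc a b, Ψ (g x) = f x / derivWithin g (Icc a b) x)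
    (hΨ : ContinuousOn Ψ (g '' Icc a b)) :
    oscInt κ f g a b = ∫ y in g a..g b, (Ψ y : ℂ) * cexp (I * κ * y) := by
  have heq : EqOn (fun x => (f x : ℂ) * cexp (I * κ * g x))
      (fun x => derivWithin g (Icc a b) x • ((fun y => (Ψ y : ℂ) * cexp (I * κ * y)) ∘ g) x)
      (uIcc a b) := by
    intro x hx
    rw [uIcc_of_le hab.le] at hx
    have hg'x : ((derivWithin g (Icc a b) x : ℝ) : ℂ) ≠ 0 := ofReal_ne_zero.mpr (hg' x hx)
    simp only [Function.comp_apply, real_smul, hΨdef x hx]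
    push_cast
    field_simp
  rw [oscInt, intervalIntegral.integral_congr heq]
  refine intervalIntegral.integral_deriv_smul_comp''
    (by rw [uIcc_of_le hab.le]; exact hg.continuousOn)
    (fun x hx => (hg.hasDerivAt_derivWithin (by simpa [hab.le] using hx)).hasDerivWithinAt)
    (by rw [uIcc_of_le hab.le]; exact hg.continuousOn_derivWithin (uniqueDiffOn_Icc hab) le_rfl)
    ?_
  rw [uIcc_of_le hab.le]
  exact hΨ.ofReal_mul_cexp κ

section GradedMesh

variable {κ : ℝ} {n : ℕ} {x : ℕ → ℝ}

lemma graded_mem_Icc (hκ : 1 < κ) (hn : 1 < n) (hx0 : x 0 = 0)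
    (hxj : ∀ j, 1 ≤ j → j ≤ n → x j = κ ^ (((j:ℝ)-1)/((n:ℝ)-1) - 1)) {j : ℕ} (hj : j ≤ n) :
    x j ∈ Icc 0 1 := by
  rcases Nat.eq_zero_or_pos j with rfl | hj₀
  · simp [hx0]
  have hn' : (1 : ℝ) < n := by exact_mod_cast hn
  have hj' : (j : ℝ) ≤ n := by exact_mod_cast hj
  rw [hxj j hj₀ hj]
  refine ⟨by positivity, Real.rpow_le_one_of_one_le_of_nonpos hκ.le ?_⟩
  rw [sub_nonpos, div_le_one (by linarith)]
  linarith

lemma graded_last (hn : 1 < n)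
    (hxj : ∀ j, 1 ≤ j → j ≤ n → x j = κ ^ (((j:ℝ)-1)/((n:ℝ)-1) - 1)) : x n = 1 := by
  have hn' : (n : ℝ) - 1 ≠ 0 := by
    have : (1 : ℝ) < n := by exact_mod_cast hn
    linarith
  rw [hxj n (by omega) le_rfl, div_self hn', sub_self, Real.rpow_zero]

lemma graded_eq_succ_mul (hκ : 1 < κ) (hn : 1 < n)
    (hxj : ∀ j, 1 ≤ j → j ≤ n → x j = κ ^ (((j:ℝ)-1)/((n:ℝ)-1) - 1)) {j : ℕ} (hj₀ : 1 ≤ j)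
    (hj : j < n) : x j = x (j + 1) * κ ^ (-(1:ℝ)/((n:ℝ)-1)) := by
  have hn' : (n : ℝ) - 1 ≠ 0 := by
    have : (1 : ℝ) < n := by exact_mod_cast hn
    linarith
  rw [hxj j hj₀ hj.le, hxj (j + 1) (by omega) hj, ← Real.rpow_add (by linarith)]
  congr 1
  push_cast
  field_simp
  ring

lemma graded_succ_sub_le (hκ : 1 < κ) (hn : 1 < n) (hx0 : x 0 = 0)
    (hxj : ∀ j, 1 ≤ j → j ≤ n → x j = κ ^ (((j:ℝ)-1)/((n:ℝ)-1) - 1)) {j : ℕ} (hj : j < n) :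
    x (j + 1) - x j ≤ max (1/κ) (1 - κ ^ (-(1:ℝ)/((n:ℝ)-1))) := by
  rcases Nat.eq_zero_or_pos j with rfl | hj₀
  · rw [hx0, hxj 1 le_rfl hn.le]
    simp [Real.rpow_neg_one]
  rw [graded_eq_succ_mul hκ hn hxj hj₀ hj]
  have hr : κ ^ (-(1:ℝ)/((n:ℝ)-1)) ≤ 1 := by
    have : (1 : ℝ) < n := by exact_mod_cast hn
    exact Real.rpow_le_one_of_one_le_of_nonpos hκ.le
      (div_nonpos_of_nonpos_of_nonneg (by norm_num) (by linarith))
  have hx1 := graded_mem_Icc hκ hn hx0 hxj (j := j + 1) hj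
  refine le_max_of_le_right ?_
  nlinarith [hx1.1, hx1.2]

end GradedMesh

theorem stmt_1_general (κ : ℝ) (hκ : 1 < κ) (n m : ℕ) (hn : 1 < n) (hm : 1 ≤ m)
    (f g Ψ : ℝ → ℝ) (σ C : ℝ)
    (hg : ContDiffOn ℝ 2 g (Set.Icc 0 1))
    (hmono : StrictMonoOn g (Set.Icc 0 1))
    (hg' : ∀ x ∈ Set.Icc (0:ℝ) 1, 0 < derivWithin g (Set.Icc 0 1) x)
    (hg'' : ∀ x ∈ Set.Ioo (0:ℝ) 1, iteratedDerivWithin 2 g (Set.Icc 0 1) x ≠ 0)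
    (hσ : IsGreatest ((fun x => |derivWithin g (Set.Icc 0 1) x|) '' Set.Icc 0 1) σ)
    (hΨdef : ∀ x ∈ Set.Icc (0:ℝ) 1, Ψ (g x) = f x / derivWithin g (Set.Icc 0 1) x)
    (hΨ : ContDiffOn ℝ (m+1) Ψ (Set.Icc (g 0) (g 1)))
    (hC : ∀ x ∈ Set.Icc (g 0) (g 1),
      |iteratedDerivWithin (m+1) Ψ (Set.Icc (g 0) (g 1)) x| ≤ C)
    (x : ℕ → ℝ) (hx0 : x 0 = 0)
    (hxj : ∀ j, 1 ≤ j → j ≤ n → x j = κ ^ (((j:ℝ)-1)/((n:ℝ)-1) - 1))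
    (N : Fin n → ℕ)
    (hNdef : ∀ j : Fin n, N j =
      ⌈max |derivWithin g (Set.Icc 0 1) (x j.val)|
           |derivWithin g (Set.Icc 0 1) (x (j.val+1))|⌉₊)
    (t : (j : Fin n) → Fin (N j) → Fin (m+1) → ℝ)
    (ht : ∀ j : Fin n, FilonNodes (x j.val) (x (j.val+1)) m (N j) (t j)) :
    ‖oscInt κ f g 0 1 - ∑ j : Fin n, compFilonQ κ m (N j) g Ψ (t j)‖
      ≤ 3*((m:ℝ)+1) / ((m.factorial : ℝ) * κ^2) * C * σ *
          (max (1/κ) (1 - κ ^ (-(1:ℝ)/((n:ℝ)-1))))^(m-1) := by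
  set η := max (1/κ) (1 - κ ^ (-(1:ℝ)/((n:ℝ)-1)))
  have hx_mem : ∀ j ≤ n, x j ∈ Icc 0 1 := fun j hj => graded_mem_Icc hκ hn hx0 hxj hj
  have hgG : MapsTo g (Icc 0 1) (Icc (g 0) (g 1)) := hmono.monotoneOn.mapsTo_Icc
  have hΨe := hΨ.continuousOn.ofReal_mul_cexp κ
  have hpiece : ∀ j : Fin n, ‖(∫ y in g (x j)..g (x (j + 1)), (Ψ y : ℂ) * cexp (I * κ * y))
      - compFilonQ κ m (N j) g Ψ (t j)‖
        ≤ (m + 2) * C * η ^ (m - 1) / (m.factorial * κ ^ 2) * (g (x (j + 1)) - g (x j)) := by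
    intro j
    have hsub : Icc (x j) (x (j + 1)) ⊆ Icc 0 1 :=
      Icc_subset_Icc (hx_mem j j.isLt.le).1 (hx_mem (j + 1) j.isLt).2
    have hN : 0 < N j := by
      rw [hNdef j, Nat.ceil_pos]
      exact lt_max_of_lt_left (abs_pos.mpr (hg' _ (hx_mem j j.isLt.le)).ne')
    exact norm_integral_sub_compFilonQ_le (one_pos.trans hκ) hm hΨ hC (hmono.mono hsub)
      (hgG.mono_left hsub) hN (hNdef j ▸ fun u hu v hv huv => sub_le_natCeil_mul_sub one_pos hg
        hg'' (hx_mem j j.isLt.le).1 (hx_mem (j + 1) j.isLt).2 hu hv huv)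
      (graded_succ_sub_le hκ hn hx0 hxj j.isLt) (ht j)
  have hsum := norm_integral_sub_sum_le (b := fun k => g (x k))
    (fun k hk => (hΨe.mono (uIcc_subset_Icc (hgG (hx_mem k hk.le))
      (hgG (hx_mem (k + 1) hk)))).intervalIntegrable) hpiece
  rw [hx0, graded_last hn hxj] at hsum
  have hg₁₀ : g 1 - g 0 ≤ σ := by
    simpa using sub_le_mul_sub_of_derivWithin_le (hg.of_le one_le_two) le_rfl le_rfl
      (fun ξ hξ => (le_abs_self _).trans (hσ.2 ⟨ξ, Ioo_subset_Icc_self hξ, rfl⟩))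
      (left_mem_Icc.mpr zero_le_one) (right_mem_Icc.mpr zero_le_one) zero_le_one
  have hC₀ : 0 ≤ C := (abs_nonneg _).trans (hC _ (hgG (left_mem_Icc.mpr zero_le_one)))
  rw [oscInt_eq_integral_comp one_pos (hg.of_le one_le_two) (fun u hu => (hg' u hu).ne') hΨdef
    (hΨ.continuousOn.mono (image_subset_iff.mpr hgG))]
  have hη : 0 ≤ η := le_max_of_le_left (by positivity)
  have hg₀₁ : 0 ≤ g 1 - g 0 := sub_nonneg.mpr (hgG (left_mem_Icc.mpr zero_le_one)).2
  calc _ ≤ (m + 2) * C * η ^ (m - 1) / (m.factorial * κ ^ 2) * (g 1 - g 0) := hsum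
    _ ≤ 3 * (m + 1) * C * η ^ (m - 1) / (m.factorial * κ ^ 2) * σ := by
      gcongr
      linarith
    _ = _ := by ring

/-- error bound for the composite moment-free Filon rule on the graded
κ-dependent partition `x_0 = 0`, `x_j = κ^{(j-1)/(n-1)-1}`, with
`N_j = ⌈max(|g'(x_{j-1})|, |g'(x_j)|)⌉` subintervals of `[x_{j-1},x_j]`. -/
theorem stmt_1 (κ : ℝ) (hκ : 1 < κ) (n m : ℕ) (hn : 1 < n) (hm : 1 ≤ m)
    (f g Ψ : ℝ → ℝ) (σ C : ℝ)
    (hf : ContDiffOn ℝ 2 f (Set.Icc 0 1))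
    (hg : ContDiffOn ℝ 2 g (Set.Icc 0 1))
    (hmono : StrictMonoOn g (Set.Icc 0 1))
    (hg' : ∀ x ∈ Set.Icc (0:ℝ) 1, 0 < derivWithin g (Set.Icc 0 1) x)
    (hg'' : ∀ x ∈ Set.Ioo (0:ℝ) 1, iteratedDerivWithin 2 g (Set.Icc 0 1) x ≠ 0)
    (hσ : IsGreatest ((fun x => |derivWithin g (Set.Icc 0 1) x|) '' Set.Icc 0 1) σ)
    (hΨdef : ∀ x ∈ Set.Icc (0:ℝ) 1, Ψ (g x) = f x / derivWithin g (Set.Icc 0 1) x)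
    (hΨ : ContDiffOn ℝ (m+1) Ψ (Set.Icc (g 0) (g 1)))
    (hC : ∀ x ∈ Set.Icc (g 0) (g 1),
      |iteratedDerivWithin (m+1) Ψ (Set.Icc (g 0) (g 1)) x| ≤ C)
    (x : ℕ → ℝ) (hx0 : x 0 = 0)
    (hxj : ∀ j, 1 ≤ j → j ≤ n → x j = κ ^ (((j:ℝ)-1)/((n:ℝ)-1) - 1))
    (N : Fin n → ℕ)
    (hNdef : ∀ j : Fin n, N j =
      ⌈max |derivWithin g (Set.Icc 0 1) (x j.val)|
           |derivWithin g (Set.Icc 0 1) (x (j.val+1))|⌉₊)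
    (t : (j : Fin n) → Fin (N j) → Fin (m+1) → ℝ)
    (ht : ∀ j : Fin n, FilonNodes (x j.val) (x (j.val+1)) m (N j) (t j)) :
    ‖oscInt κ f g 0 1 - ∑ j : Fin n, compFilonQ κ m (N j) g Ψ (t j)‖
      ≤ 3*((m:ℝ)+1) / ((m.factorial : ℝ) * κ^2) * C * σ *
          (max (1/κ) (1 - κ ^ (-(1:ℝ)/((n:ℝ)-1))))^(m-1) :=
  stmt_1_general κ hκ n m hn hm f g Ψ σ C hg hmono hg' hg'' hσ hΨdef hΨ hC x hx0 hxj N hNdef t ht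
end
end

section
/- Let r ≥ 0 be an integer, m ∈ ℕ and μ ∈ (−1,1). If f is of Type(μ, 2m, {0}) and g ∈ C^{2m}([0,1]) satisfies Assumption A(r), then there exists a positive constant c such that for all κ > 1 and all x ∈ (0,1], |φ_κ^{(2m)}(x)| ≤ c λ_r^μ x^{μ−2m}, where φ_κ(x) := f(λ_r x) e^{iκ g(λ_r x)}. -/
/-!
Write `φ_κ = a · exp (i u)` with `a y = f (λ y)` and `u y = κ g (λ y)`, where `λ = λ_r`.
Scaling gives `|a⁽ⁱ⁾ x| ≤ c_f λ^μ x^(μ - i)`. Since `g` vanishes to order `r` at `0`,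
`|g⁽ⁱ⁾ t| ≤ B t^(r + 1 - i)`, hence `|u⁽ⁱ⁾ x| ≤ B κ λ^(r + 1) x^(-i) ≤ B x^(-i)` because
`κ λ_r^(r + 1) = κ / κ_σ ≤ 1`. The Leibniz rule and the Faà di Bruno bound for `exp (i u)`
(every derivative of `t ↦ exp (i t)` has modulus `1`) combine these into the claim.
-/

open scoped BigOperators

noncomputable section

/-- `κ_{σ(r)} := κ` if `σ(r) ≤ 1`, and `κ σ(r)` otherwise. -/
def kappaSigma (κ σr : ℝ) : ℝ := if σr ≤ 1 then κ else κ * σr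

/-- `λ_r := κ_{σ(r)}^{-1/(r+1)}`. -/
def lambdaR (κ σr : ℝ) (r : ℕ) : ℝ := (kappaSigma κ σr) ^ (-(1:ℝ)/((r:ℝ)+1))

open Set Complex

section ScaleParameter

variable {κ σr : ℝ}

theorem one_lt_kappaSigma (hκ : 1 < κ) : 1 < kappaSigma κ σr := by
  unfold kappaSigma
  split_ifs with hσ
  · exact hκ
  · nlinarith

theorem le_kappaSigma (hκ : 0 ≤ κ) : κ ≤ kappaSigma κ σr := by
  unfold kappaSigma
  split_ifs with hσ
  · exact le_rfl
  · nlinarith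

theorem lambdaR_mem_Ioo (hκ : 1 < κ) (r : ℕ) : lambdaR κ σr r ∈ Ioo 0 1 :=
  ⟨Real.rpow_pos_of_pos (one_pos.trans (one_lt_kappaSigma hκ)) _,
    Real.rpow_lt_one_of_one_lt_of_neg (one_lt_kappaSigma hκ)
      (div_neg_of_neg_of_pos (by norm_num) (by positivity))⟩

theorem lambdaR_pow_succ (hκ : 0 ≤ kappaSigma κ σr) (r : ℕ) :
    lambdaR κ σr r ^ (r + 1) = (kappaSigma κ σr)⁻¹ := by
  rw [lambdaR, ← Real.rpow_natCast, ← Real.rpow_mul hκ, ← Real.rpow_neg_one]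
  congr 1
  push_cast
  field_simp

theorem mul_lambdaR_pow_succ_le_one (hκ : 1 < κ) (r : ℕ) :
    κ * lambdaR κ σr r ^ (r + 1) ≤ 1 := by
  have hκσ : 0 < kappaSigma κ σr := one_pos.trans (one_lt_kappaSigma hκ)
  rw [lambdaR_pow_succ hκσ.le, ← div_eq_mul_inv, div_le_one hκσ]
  exact le_kappaSigma (by linarith)

end ScaleParameter

theorem iteratedDeriv_cexp_ofReal_mul_I (n : ℕ) :
    iteratedDeriv n (fun t : ℝ => cexp (t * I)) = fun t : ℝ => I ^ n * cexp (t * I) := by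
  induction n with
  | zero => simp
  | succ n ih =>
    rw [iteratedDeriv_succ, ih]
    funext t
    have := (((hasDerivAt_id t).ofReal_comp).mul_const I).cexp.const_mul (I ^ n)
    simpa [pow_succ, mul_assoc, mul_comm, mul_left_comm] using this.deriv

theorem norm_iteratedFDeriv_cexp_ofReal_mul_I (n : ℕ) (t : ℝ) :
    ‖iteratedFDeriv ℝ n (fun t : ℝ => cexp (t * I)) t‖ = 1 := by
  rw [norm_iteratedFDeriv_eq_norm_iteratedDeriv, iteratedDeriv_cexp_ofReal_mul_I]
  simp [norm_exp_ofReal_mul_I]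

theorem norm_iteratedDerivWithin_ofReal_mul_cexp_le {s : Set ℝ} (hs : UniqueDiffOn ℝ s)
    {n : ℕ} {a u : ℝ → ℝ} (ha : ContDiffOn ℝ n a s) (hu : ContDiffOn ℝ n u s)
    {x : ℝ} (hx : x ∈ s) {D : ℝ}
    (hD : ∀ i, 1 ≤ i → i ≤ n → |iteratedDerivWithin i u s x| ≤ D ^ i) :
    ‖iteratedDerivWithin n (fun y => (a y : ℂ) * cexp (u y * I)) s x‖ ≤
      ∑ i ∈ Finset.range (n + 1),
        n.choose i * |iteratedDerivWithin i a s x| * ((n - i).factorial * D ^ (n - i)) := by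
  have hcexp : ContDiff ℝ n fun t : ℝ => cexp (t * I) :=
    contDiff_exp.comp (ofRealCLM.contDiff.mul contDiff_const)
  have hA : ContDiffOn ℝ n (ofRealLI ∘ a) s := ofRealCLM.contDiff.comp_contDiffOn ha
  have hE : ContDiffOn ℝ n ((fun t : ℝ => cexp (t * I)) ∘ u) s :=
    hcexp.comp_contDiffOn hu
  rw [← norm_iteratedFDerivWithin_eq_norm_iteratedDerivWithin]
  refine (norm_iteratedFDerivWithin_mul_le hA hE hs hx le_rfl).trans
    (Finset.sum_le_sum fun i hi => ?_)
  have hi : i ≤ n := Nat.lt_succ_iff.1 (Finset.mem_range.1 hi)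
  rw [ofRealLI.norm_iteratedFDerivWithin_comp_left (ha x hx) hs hx (by exact_mod_cast hi),
    norm_iteratedFDerivWithin_eq_norm_iteratedDerivWithin, Real.norm_eq_abs]
  gcongr
  refine (norm_iteratedFDerivWithin_comp_le (t := univ)
    hcexp.contDiffOn hu
    (by exact_mod_cast Nat.sub_le n i) uniqueDiffOn_univ hs (mapsTo_univ _ _) hx
    (fun j _ => (by rw [iteratedFDerivWithin_univ, norm_iteratedFDeriv_cexp_ofReal_mul_I]))
    (fun j hj hjn => by
      rw [norm_iteratedFDerivWithin_eq_norm_iteratedDerivWithin, Real.norm_eq_abs]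
      exact hD j hj (hjn.trans (Nat.sub_le n i)))).trans_eq (by ring)

theorem norm_iteratedDerivWithin_ofReal_mul_cexp_le_rpow {s : Set ℝ} (hs : UniqueDiffOn ℝ s)
    {n : ℕ} {a u : ℝ → ℝ} (ha : ContDiffOn ℝ n a s) (hu : ContDiffOn ℝ n u s)
    {x : ℝ} (hx : x ∈ s) (hx0 : 0 < x) {A C μ : ℝ} (hC : 0 ≤ C)
    (haA : ∀ i ≤ n, |iteratedDerivWithin i a s x| ≤ A * x ^ (μ - i))
    (huC : ∀ i, 1 ≤ i → i ≤ n → |iteratedDerivWithin i u s x| ≤ (C / x) ^ i) :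
    ‖iteratedDerivWithin n (fun y => (a y : ℂ) * cexp (u y * I)) s x‖ ≤
      (∑ i ∈ Finset.range (n + 1), n.choose i * (n - i).factorial * C ^ (n - i)) * A *
        x ^ (μ - n) := by
  refine (norm_iteratedDerivWithin_ofReal_mul_cexp_le hs ha hu hx huC).trans ?_
  rw [Finset.sum_mul, Finset.sum_mul]
  refine Finset.sum_le_sum fun i hi => ?_
  have hi : i ≤ n := Nat.lt_succ_iff.1 (Finset.mem_range.1 hi)
  have hpow : x ^ (μ - i) * (C / x) ^ (n - i) = C ^ (n - i) * x ^ (μ - n) := by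
    rw [div_pow, ← Real.rpow_natCast x, Nat.cast_sub hi, mul_div_assoc', mul_comm,
      mul_div_assoc, ← Real.rpow_sub hx0]
    ring_nf
  calc (n.choose i : ℝ) * |iteratedDerivWithin i a s x| * ((n - i).factorial * (C / x) ^ (n - i))
      ≤ n.choose i * (A * x ^ (μ - i)) * ((n - i).factorial * (C / x) ^ (n - i)) := by
        gcongr
        exact haA i hi
    _ = n.choose i * (n - i).factorial * A * (x ^ (μ - i) * (C / x) ^ (n - i)) := by ring
    _ = n.choose i * (n - i).factorial * C ^ (n - i) * A * x ^ (μ - n) := by rw [hpow]; ring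

theorem ContDiffOn.exists_bound_iteratedDerivWithin {𝕜 F : Type*} [NontriviallyNormedField 𝕜]
    [NormedAddCommGroup F] [NormedSpace 𝕜 F] {f : 𝕜 → F} {s : Set 𝕜} {n : ℕ}
    (hf : ContDiffOn 𝕜 n f s) (hs : UniqueDiffOn 𝕜 s) (hK : IsCompact s) :
    ∃ M, ∀ j ≤ n, ∀ x ∈ s, ‖iteratedDerivWithin j f s x‖ ≤ M := by
  have hcont : ContinuousOn
      (fun x => ∑ j ∈ Finset.range (n + 1), ‖iteratedDerivWithin j f s x‖) s :=
    continuousOn_finsetSum _ fun j hj => (hf.continuousOn_iteratedDerivWithin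
      (by exact_mod_cast Nat.lt_succ_iff.1 (Finset.mem_range.1 hj)) hs).norm
  obtain ⟨M, hM⟩ := hK.exists_bound_of_continuousOn hcont
  refine ⟨M, fun j hj x hx => ?_⟩
  calc ‖iteratedDerivWithin j f s x‖
      ≤ ∑ j ∈ Finset.range (n + 1), ‖iteratedDerivWithin j f s x‖ :=
        Finset.single_le_sum (f := fun j => ‖iteratedDerivWithin j f s x‖)
          (fun _ _ => norm_nonneg _) (Finset.mem_range.2 (Nat.lt_succ_of_le hj))
    _ ≤ M := (Real.le_norm_self _).trans (hM x hx)

theorem abs_iteratedDerivWithin_le_mul_pow_of_eq_zero {g : ℝ → ℝ} {a b : ℝ} (hab : a < b)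
    {r : ℕ} (hg : ContDiffOn ℝ (r + 1) g (Icc a b))
    (hg0 : ∀ j ≤ r, iteratedDerivWithin j g (Icc a b) a = 0) {M : ℝ}
    (hM : ∀ t ∈ Icc a b, |iteratedDerivWithin (r + 1) g (Icc a b) t| ≤ M)
    {j : ℕ} (hj : j ≤ r + 1) {t : ℝ} (ht : t ∈ Icc a b) :
    |iteratedDerivWithin j g (Icc a b) t| ≤ M * (t - a) ^ (r + 1 - j) := by
  have hud : UniqueDiffOn ℝ (Icc a b) := uniqueDiffOn_Icc hab
  have hM0 : 0 ≤ M := (abs_nonneg _).trans (hM a (left_mem_Icc.2 hab.le))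
  obtain ⟨k, hk, rfl⟩ : ∃ k ≤ r + 1, j = r + 1 - k := ⟨r + 1 - j, Nat.sub_le _ _, by omega⟩
  clear hj
  rw [Nat.sub_sub_self hk]
  induction k generalizing t with
  | zero => simpa using hM t ht
  | succ k ih =>
    have hsub : Icc a t ⊆ Icc a b := Icc_subset_Icc_right ht.2
    have hderiv : ∀ y ∈ Icc a t, HasDerivWithinAt (iteratedDerivWithin (r - k) g (Icc a b))
        (iteratedDerivWithin (r + 1 - k) g (Icc a b) y) (Icc a t) y := by
      intro y hy
      have hdiff := hg.differentiableOn_iteratedDerivWithin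
        (by exact_mod_cast (by omega : r - k < r + 1)) hud y (hsub hy)
      rw [show r + 1 - k = r - k + 1 by omega, iteratedDerivWithin_succ]
      exact hdiff.hasDerivWithinAt.mono hsub
    have hbound : ∀ y ∈ Ico a t,
        ‖iteratedDerivWithin (r + 1 - k) g (Icc a b) y‖ ≤ M * (t - a) ^ k := by
      intro y hy
      calc ‖iteratedDerivWithin (r + 1 - k) g (Icc a b) y‖ ≤ M * (y - a) ^ k :=
            ih (hsub (Ico_subset_Icc_self hy)) (by omega)
        _ ≤ M * (t - a) ^ k := by
            have : y - a ≤ t - a := by linarith [hy.2]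
            have : 0 ≤ y - a := by linarith [hy.1]
            gcongr
    have := norm_image_sub_le_of_norm_deriv_le_segment' hderiv hbound t (right_mem_Icc.2 ht.1)
    rw [show r + 1 - (k + 1) = r - k by omega]
    rwa [hg0 (r - k) (Nat.sub_le r k), sub_zero, Real.norm_eq_abs, mul_assoc, ← pow_succ] at this

/-- For `i > r + 1` the truncated exponent `r + 1 - i` is `0`: the bound is then plain
boundedness. -/
theorem exists_abs_iteratedDerivWithin_le_mul_pow {g : ℝ → ℝ} {n r : ℕ}
    (hgn : ContDiffOn ℝ n g (Icc 0 1)) (hgr : ContDiffOn ℝ (r + 1) g (Icc 0 1))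
    (hg0 : ∀ j ≤ r, iteratedDerivWithin j g (Icc 0 1) 0 = 0) :
    ∃ B, 0 ≤ B ∧ ∀ i ≤ n, ∀ t ∈ Icc (0:ℝ) 1,
      |iteratedDerivWithin i g (Icc 0 1) t| ≤ B * t ^ (r + 1 - i) := by
  have hud : UniqueDiffOn ℝ (Icc (0:ℝ) 1) := uniqueDiffOn_Icc one_pos
  obtain ⟨M₁, hM₁⟩ := hgr.exists_bound_iteratedDerivWithin hud isCompact_Icc
  obtain ⟨M₂, hM₂⟩ := hgn.exists_bound_iteratedDerivWithin hud isCompact_Icc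
  simp only [Real.norm_eq_abs] at hM₁ hM₂
  refine ⟨max M₁ M₂, (abs_nonneg _).trans ((hM₂ 0 n.zero_le 0 (left_mem_Icc.2 zero_le_one)).trans
    (le_max_right _ _)), fun i hi t ht => ?_⟩
  rcases le_or_gt i (r + 1) with hir | hir
  · have ht0 : 0 ≤ t := ht.1
    have := abs_iteratedDerivWithin_le_mul_pow_of_eq_zero one_pos hgr hg0
      (hM₁ (r + 1) le_rfl) hir ht
    rw [sub_zero] at this
    exact this.trans (by gcongr; exact le_max_left _ _)
  · rw [Nat.sub_eq_zero_of_le hir.le, pow_zero, mul_one]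
    exact (hM₂ i hi t ht).trans (le_max_right _ _)

theorem iteratedDerivWithin_Ioc_eq_Icc {F : Type*} [NormedAddCommGroup F] [NormedSpace ℝ F]
    {f : ℝ → F} {a b x : ℝ} (hx : a < x) (n : ℕ) :
    iteratedDerivWithin n f (Ioc a b) x = iteratedDerivWithin n f (Icc a b) x := by
  have hset : Ioc a b =ᶠ[nhds x] Icc a b := by
    filter_upwards [Ioi_mem_nhds hx] with y hy
    exact propext ⟨fun h => Ioc_subset_Icc_self h, fun h => ⟨hy, h.2⟩⟩
  simp only [iteratedDerivWithin, iteratedFDerivWithin_congr_set hset]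

theorem abs_iteratedDerivWithin_comp_mul_le {f : ℝ → ℝ} {n : ℕ}
    (hf : ContDiffOn ℝ n f (Ioc 0 1)) {cf μ : ℝ}
    (hfb : ∀ j ≤ n, ∀ x ∈ Ioc (0:ℝ) 1, |iteratedDerivWithin j f (Ioc 0 1) x| ≤ cf * x ^ (μ - j))
    {c : ℝ} (hc0 : 0 < c) (hc1 : c ≤ 1) {j : ℕ} (hj : j ≤ n) {x : ℝ} (hx : x ∈ Ioc (0:ℝ) 1) :
    |iteratedDerivWithin j (fun y => f (c * y)) (Ioc 0 1) x| ≤ cf * c ^ μ * x ^ (μ - j) := by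
  have hmaps : MapsTo (c * ·) (Ioc (0:ℝ) 1) (Ioc 0 1) := fun y hy =>
    ⟨mul_pos hc0 hy.1, mul_le_one₀ hc1 hy.1.le hy.2⟩
  rw [iteratedDerivWithin_comp_const_smul hx (uniqueDiffOn_Ioc 0 1)
    (hf.of_le (by exact_mod_cast hj)) c hmaps, smul_eq_mul, abs_mul,
    abs_of_pos (pow_pos hc0 j)]
  calc c ^ j * |iteratedDerivWithin j f (Ioc 0 1) (c * x)|
      ≤ c ^ j * (cf * (c * x) ^ (μ - j)) := by
        gcongr
        exact hfb j hj _ (hmaps hx)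
    _ = cf * c ^ μ * x ^ (μ - j) := by
        rw [Real.mul_rpow hc0.le hx.1.le, ← Real.rpow_natCast c j, Real.rpow_sub hc0]
        field_simp

theorem abs_iteratedDerivWithin_const_mul_comp_mul_mul_pow_le {g : ℝ → ℝ} {n r : ℕ}
    (hg : ContDiffOn ℝ n g (Icc 0 1)) {B : ℝ} (hB : 0 ≤ B)
    (hgB : ∀ i ≤ n, ∀ t ∈ Icc (0:ℝ) 1, |iteratedDerivWithin i g (Icc 0 1) t| ≤ B * t ^ (r + 1 - i))
    {κ L : ℝ} (hκ : 0 ≤ κ) (hL0 : 0 ≤ L) (hL1 : L ≤ 1) (hκL : κ * L ^ (r + 1) ≤ 1)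
    {i : ℕ} (hi : i ≤ n) {x : ℝ} (hx : x ∈ Ioc (0:ℝ) 1) :
    |iteratedDerivWithin i (fun y => κ * g (L * y)) (Ioc 0 1) x| * x ^ i ≤ B := by
  have hud : UniqueDiffOn ℝ (Icc (0:ℝ) 1) := uniqueDiffOn_Icc one_pos
  have hx' : x ∈ Icc (0:ℝ) 1 := Ioc_subset_Icc_self hx
  have hx0 : 0 ≤ x := hx'.1
  have hmaps : MapsTo (L * ·) (Icc (0:ℝ) 1) (Icc 0 1) := fun y hy =>
    ⟨mul_nonneg hL0 hy.1, mul_le_one₀ hL1 hy.1 hy.2⟩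
  have hgi : ContDiffOn ℝ i g (Icc 0 1) := hg.of_le (by exact_mod_cast hi)
  have hgL : ContDiffOn ℝ i (fun y => g (L * y)) (Icc 0 1) :=
    hgi.comp (contDiff_const.mul contDiff_id).contDiffOn hmaps
  rw [iteratedDerivWithin_Ioc_eq_Icc hx.1, iteratedDerivWithin_const_mul hx' hud κ (hgL x hx'),
    iteratedDerivWithin_comp_const_smul hx' hud hgi L hmaps, smul_eq_mul]
  have hk : r + 1 ≤ i + (r + 1 - i) := by omega
  calc |κ * (L ^ i * iteratedDerivWithin i g (Icc 0 1) (L * x))| * x ^ i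
      = κ * L ^ i * |iteratedDerivWithin i g (Icc 0 1) (L * x)| * x ^ i := by
        rw [abs_mul, abs_mul, abs_of_nonneg hκ, abs_of_nonneg (pow_nonneg hL0 i)]
        ring
    _ ≤ κ * L ^ i * (B * (L * x) ^ (r + 1 - i)) * x ^ i := by
        have := hgB i hi _ (hmaps hx')
        gcongr
    _ = B * (κ * L ^ (i + (r + 1 - i))) * x ^ (i + (r + 1 - i)) := by ring
    _ ≤ B * 1 * 1 := by
        have hLk : L ^ (i + (r + 1 - i)) ≤ L ^ (r + 1) := pow_le_pow_of_le_one hL0 hL1 hk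
        have hκLk : κ * L ^ (i + (r + 1 - i)) ≤ 1 :=
          (mul_le_mul_of_nonneg_left hLk hκ).trans hκL
        have hxk : x ^ (i + (r + 1 - i)) ≤ 1 := pow_le_one₀ hx.1.le hx.2
        gcongr
    _ = B := by ring

theorem stmt_8_general (r m : ℕ) (μ : ℝ)
    (f g : ℝ → ℝ) (σr : ℝ)
    (hfC : ContDiffOn ℝ (2*m) f (Set.Ioc 0 1))
    (hfb : ∃ cf : ℝ, 0 < cf ∧ ∀ j ≤ 2*m, ∀ x ∈ Set.Ioc (0:ℝ) 1,
      |iteratedDerivWithin j f (Set.Ioc 0 1) x| ≤ cf * x ^ (μ - (j:ℝ)))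
    (hg2m : ContDiffOn ℝ (2*m) g (Set.Icc 0 1))
    (hgr : ContDiffOn ℝ (r+1) g (Set.Icc 0 1))
    (hg0 : ∀ j ≤ r, iteratedDerivWithin j g (Set.Icc 0 1) 0 = 0) :
    ∃ c : ℝ, 0 < c ∧ ∀ κ : ℝ, 1 < κ → ∀ x ∈ Set.Ioc (0:ℝ) 1,
      ‖iteratedDerivWithin (2*m)
          (fun y : ℝ => (f (lambdaR κ σr r * y) : ℂ) *
            Complex.exp (Complex.I * κ * g (lambdaR κ σr r * y)))
          (Set.Ioc 0 1) x‖
        ≤ c * (lambdaR κ σr r) ^ μ * x ^ (μ - (2*(m:ℝ))) := by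
  obtain ⟨cf, hcf, hfb⟩ := hfb
  have hfC : ContDiffOn ℝ (2 * m : ℕ) f (Ioc 0 1) := by exact_mod_cast hfC
  have hg2m : ContDiffOn ℝ (2 * m : ℕ) g (Icc 0 1) := by exact_mod_cast hg2m
  obtain ⟨B, hB, hgB⟩ := exists_abs_iteratedDerivWithin_le_mul_pow hg2m hgr hg0
  set C := max B 1
  have hC1 : 1 ≤ C := le_max_right B 1
  set K := ∑ i ∈ Finset.range (2 * m + 1),
    ((2 * m).choose i : ℝ) * (2 * m - i).factorial * C ^ (2 * m - i)
  have hK : 0 < K := Finset.sum_pos' (fun i _ => by positivity)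
    ⟨2 * m, Finset.self_mem_range_succ _, by simp⟩
  refine ⟨K * cf, by positivity, fun κ hκ x hx => ?_⟩
  set L := lambdaR κ σr r
  obtain ⟨hL0, hL1⟩ : 0 < L ∧ L ≤ 1 := (lambdaR_mem_Ioo hκ r).imp_right le_of_lt
  have hmaps : MapsTo (L * ·) (Ioc (0:ℝ) 1) (Ioc 0 1) := fun y hy =>
    ⟨mul_pos hL0 hy.1, mul_le_one₀ hL1 hy.1.le hy.2⟩
  have ha : ContDiffOn ℝ (2 * m : ℕ) (fun y => f (L * y)) (Ioc 0 1) :=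
    hfC.comp (contDiff_const.mul contDiff_id).contDiffOn hmaps
  have hu : ContDiffOn ℝ (2 * m : ℕ) (fun y => κ * g (L * y)) (Ioc 0 1) :=
    contDiffOn_const.mul (hg2m.comp (contDiff_const.mul contDiff_id).contDiffOn
      (hmaps.mono_right Ioc_subset_Icc_self))
  have hφ : (fun y : ℝ => (f (L * y) : ℂ) * cexp (I * κ * g (L * y))) =
      fun y => ((f (L * y) : ℝ) : ℂ) * cexp (((κ * g (L * y) : ℝ) : ℂ) * I) := by
    funext y; push_cast; ring_nf
  rw [hφ]
  refine (norm_iteratedDerivWithin_ofReal_mul_cexp_le_rpow (uniqueDiffOn_Ioc 0 1) ha hu hx hx.1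
    (zero_le_one.trans hC1) (fun i hi => abs_iteratedDerivWithin_comp_mul_le hfC hfb hL0 hL1 hi hx)
    (fun i hi1 hi => ?_)).trans_eq ?_
  · have := abs_iteratedDerivWithin_const_mul_comp_mul_mul_pow_le hg2m hB hgB (by linarith)
      hL0.le hL1 (mul_lambdaR_pow_succ_le_one hκ r) hi hx
    rw [div_pow, le_div_iff₀ (pow_pos hx.1 i)]
    exact this.trans ((le_max_left B 1).trans (le_self_pow₀ hC1 (by omega)))
  · push_cast
    ring

/-- if `f` is of Type(μ, 2m, {0}) and `g ∈ C^{2m}([0,1])` satisfies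
Assumption A(r), then `|φ_κ^{(2m)}(x)| ≤ c λ_r^μ x^{μ-2m}` on `(0,1]` uniformly for `κ > 1`,
where `φ_κ(x) = f(λ_r x) e^{iκ g(λ_r x)}`. -/
theorem stmt_8 (r m : ℕ) (hm : 1 ≤ m) (μ : ℝ) (hμ : μ ∈ Set.Ioo (-1:ℝ) 1)
    (f g : ℝ → ℝ) (σr : ℝ)
    (hfC : ContDiffOn ℝ (2*m) f (Set.Ioc 0 1))
    (hfb : ∃ cf : ℝ, 0 < cf ∧ ∀ j ≤ 2*m, ∀ x ∈ Set.Ioc (0:ℝ) 1,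
      |iteratedDerivWithin j f (Set.Ioc 0 1) x| ≤ cf * x ^ (μ - (j:ℝ)))
    (hg2m : ContDiffOn ℝ (2*m) g (Set.Icc 0 1))
    (hgr : ContDiffOn ℝ (r+1) g (Set.Icc 0 1))
    (hmono : StrictMonoOn g (Set.Icc 0 1))
    (hnoinfl : ConvexOn ℝ (Set.Icc 0 1) g ∨ ConcaveOn ℝ (Set.Icc 0 1) g)
    (hg0 : ∀ j ≤ r, iteratedDerivWithin j g (Set.Icc 0 1) 0 = 0)
    (hgne : ∀ x ∈ Set.Icc (0:ℝ) 1, iteratedDerivWithin (r+1) g (Set.Icc 0 1) x ≠ 0)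
    (hσ : IsGreatest
      ((fun x => |iteratedDerivWithin (r+1) g (Set.Icc 0 1) x| / ((r+1).factorial : ℝ)) ''
        Set.Icc 0 1) σr) :
    ∃ c : ℝ, 0 < c ∧ ∀ κ : ℝ, 1 < κ → ∀ x ∈ Set.Ioc (0:ℝ) 1,
      ‖iteratedDerivWithin (2*m)
          (fun y : ℝ => (f (lambdaR κ σr r * y) : ℂ) *
            Complex.exp (Complex.I * κ * g (lambdaR κ σr r * y)))
          (Set.Ioc 0 1) x‖
        ≤ c * (lambdaR κ σr r) ^ μ * x ^ (μ - (2*(m:ℝ))) :=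
  stmt_8_general r m μ f g σr hfC hfb hg2m hgr hg0
end
end
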